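/- arXiv:1804.02546 — 7 statements merged into one kernel-verified Lean document; each statement's English description precedes it below -/
import Mathlib

section
/- The family λ is natural: for all posets X, Y, every monotone map f : X → Y, and every S ∈ Dn(Up X), one has Up(Dn f)(λ_X(S)) = λ_Y(Dn(Up f)(S)). -/
/-- The action of the upset functor `Up` on a map: the upward closure of the image. -/
def UpMap {X Y : Type*} [Preorder X] [Preorder Y] (f : X → Y) (S : UpperSet X) :
    UpperSet Y :=
  upperClosure (f '' (S : Set X))

/-- The action of the downset functor `Dn` on a map: the downward closure of the image. -/
def DnMap {X Y : Type*} [Preorder X] [Preorder Y] (f : X → Y) (S : LowerSet X) :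
    LowerSet Y :=
  lowerClosure (f '' (S : Set X))

/-- The unit of the upset monad: `x ↦ ↑{x}`. -/
def UpUnit {X : Type*} [Preorder X] (x : X) : UpperSet X :=
  UpperSet.Ici x

/-- The unit of the downset monad: `x ↦ ↓{x}`. -/
def DnUnit {X : Type*} [Preorder X] (x : X) : LowerSet X :=
  LowerSet.Iic x

/-- The multiplication of the upset monad: union. -/
def UpMul {X : Type*} [Preorder X] (S : UpperSet (UpperSet X)) : UpperSet X :=
  ⟨{x : X | ∃ s ∈ S, x ∈ s}, by
    rintro a b hab ⟨s, hs, has⟩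
    exact ⟨s, hs, s.upper hab has⟩⟩

/-- The multiplication of the downset monad: union. -/
def DnMul {X : Type*} [Preorder X] (S : LowerSet (LowerSet X)) : LowerSet X :=
  ⟨{x : X | ∃ s ∈ S, x ∈ s}, by
    rintro a b hba ⟨s, hs, has⟩
    exact ⟨s, hs, s.lower hba has⟩⟩

/-- The distributive law `λ_X : Dn (Up X) → Up (Dn X)`,
`S ↦ {T ∈ Dn X | ∀ s ∈ S, s ∩ T ≠ ∅}`. -/
def distLaw {X : Type*} [Preorder X] (S : LowerSet (UpperSet X)) : UpperSet (LowerSet X) :=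
  ⟨{T : LowerSet X | ∀ s ∈ S, ((s : Set X) ∩ (T : Set X)).Nonempty}, by
    intro T T' hTT' h s hs
    exact (h s hs).imp fun x hx => ⟨hx.1, hTT' hx.2⟩⟩

/-!
For monotone `f`, `Dn f` is left adjoint to taking preimages of lower sets, so a lower set `U`
lies in `Up (Dn f) (λ_X S)` exactly when `f ⁻¹' U ∈ λ_X S`. On the other side, the upward
closure of `f '' s` meets the lower set `U` exactly when `s` meets `f ⁻¹' U`. Both memberships
therefore say that `f ⁻¹' U` meets every `s ∈ S`.
-/

def LowerSet.comap {X Y : Type*} [Preorder X] [Preorder Y] (f : X → Y) (hf : Monotone f)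
    (U : LowerSet Y) : LowerSet X :=
  ⟨f ⁻¹' U, U.lower.preimage hf⟩

section

variable {X Y : Type*} [Preorder X] [Preorder Y]

theorem dnMap_le_iff {f : X → Y} {T : LowerSet X} {U : LowerSet Y} :
    DnMap f T ≤ U ↔ ∀ x ∈ T, f x ∈ U := by
  rw [DnMap, lowerClosure_le, Set.image_subset_iff]
  rfl

theorem gc_dnMap_comap {f : X → Y} (hf : Monotone f) :
    GaloisConnection (DnMap f) (LowerSet.comap f hf) :=
  fun _ _ => dnMap_le_iff

theorem GaloisConnection.mem_upMap_iff {l : X → Y} {u : Y → X} (gc : GaloisConnection l u)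
    (A : UpperSet X) (b : Y) : b ∈ UpMap l A ↔ u b ∈ A := by
  constructor
  · rintro ⟨_, ⟨a, ha, rfl⟩, hab⟩
    exact A.upper (gc.le_iff_le.1 hab) ha
  · exact fun h => ⟨l (u b), ⟨u b, h, rfl⟩, gc.l_u_le b⟩

theorem upMap_inter_nonempty_iff (f : X → Y) (s : UpperSet X) (U : LowerSet Y) :
    ((UpMap f s : Set Y) ∩ U).Nonempty ↔ ((s : Set X) ∩ f ⁻¹' U).Nonempty := by
  constructor
  · rintro ⟨y, ⟨_, ⟨x, hx, rfl⟩, hxy⟩, hy⟩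
    exact ⟨x, hx, U.lower hxy hy⟩
  · rintro ⟨x, hx, hfx⟩
    exact ⟨f x, subset_upperClosure ⟨x, hx, rfl⟩, hfx⟩

theorem mem_distLaw_dnMap_iff (g : UpperSet X → UpperSet Y) (S : LowerSet (UpperSet X))
    (U : LowerSet Y) :
    U ∈ distLaw (DnMap g S) ↔ ∀ s ∈ S, ((g s : Set Y) ∩ U).Nonempty := by
  constructor
  · exact fun h s hs => h (g s) (subset_lowerClosure ⟨s, hs, rfl⟩)
  · rintro h t ⟨_, ⟨s, hs, rfl⟩, hts⟩
    exact (h s hs).mono (Set.inter_subset_inter_left _ (UpperSet.coe_subset_coe.2 hts))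

end

/-- Naturality of the distributive law `λ : Dn ∘ Up ⟹ Up ∘ Dn`:
`Up(Dn f)(λ_X S) = λ_Y (Dn(Up f) S)` for monotone `f`. -/
theorem distLaw_natural {X Y : Type*} [PartialOrder X] [PartialOrder Y]
    (f : X → Y) (hf : Monotone f) (S : LowerSet (UpperSet X)) :
    UpMap (DnMap f) (distLaw S) = distLaw (DnMap (UpMap f) S) := by
  refine SetLike.ext fun U => ?_
  rw [(gc_dnMap_comap hf).mem_upMap_iff, mem_distLaw_dnMap_iff]
  exact forall₂_congr fun s _ => (upMap_inter_nonempty_iff f s U).symm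
end

section
/- For every poset X and every upper set S ∈ Up X, one has λ_X(η^Dn_{Up X}(S)) = Up(η^Dn_X)(S); concretely, both sides equal the set {T ∈ Dn X | (S ∩ T).Nonempty}. -/
section Preorder

variable {X : Type*} [Preorder X]

theorem mem_distLaw_dnUnit_iff (S : UpperSet X) (T : LowerSet X) :
    T ∈ distLaw (DnUnit S) ↔ ((S : Set X) ∩ (T : Set X)).Nonempty := by
  refine ⟨fun h => h S (LowerSet.mem_Iic_iff.mpr le_rfl), ?_⟩
  rintro ⟨x, hxS, hxT⟩ s hs
  exact ⟨x, UpperSet.coe_subset_coe.mpr (LowerSet.mem_Iic_iff.mp hs) hxS, hxT⟩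

theorem mem_upMap_dnUnit_iff (S : UpperSet X) (T : LowerSet X) :
    T ∈ UpMap DnUnit S ↔ ((S : Set X) ∩ (T : Set X)).Nonempty := by
  simp only [UpMap, mem_upperClosure, Set.exists_mem_image, DnUnit, LowerSet.Iic_le]
  rfl

end Preorder

/-- The unit law of the distributive law for the unit of `Dn`:
`λ_X (η^Dn_{Up X} S) = Up(η^Dn_X) S`, and concretely both sides are
`{T ∈ Dn X | (S ∩ T).Nonempty}`. -/
theorem distLaw_dnUnit {X : Type*} [PartialOrder X] (S : UpperSet X) :
    distLaw (DnUnit S) = UpMap (DnUnit (X := X)) S ∧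
    (distLaw (DnUnit S) : Set (LowerSet X))
      = {T : LowerSet X | ((S : Set X) ∩ (T : Set X)).Nonempty} :=
  ⟨SetLike.ext fun T => (mem_distLaw_dnUnit_iff S T).trans (mem_upMap_dnUnit_iff S T).symm,
    Set.ext (mem_distLaw_dnUnit_iff S)⟩
end

section
/- For every poset X and every lower set S ∈ Dn X, one has λ_X(Dn(η^Up_X)(S)) = η^Up_{Dn X}(S); concretely, both sides equal the set {T ∈ Dn X | S ⊆ T}. -/
lemma mem_distLaw_lowerClosure {X : Type*} [Preorder X] (A : Set (UpperSet X))
    (T : LowerSet X) :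
    T ∈ distLaw (lowerClosure A) ↔ ∀ s ∈ A, ((s : Set X) ∩ (T : Set X)).Nonempty := by
  refine ⟨fun h s hs => h s (subset_lowerClosure hs), ?_⟩
  rintro h u ⟨s, hs, hus⟩
  exact (h s hs).mono (Set.inter_subset_inter_left _ (UpperSet.coe_subset_coe.mpr hus))

lemma LowerSet.Ici_inter_nonempty_iff {X : Type*} [Preorder X] (T : LowerSet X) (x : X) :
    (Set.Ici x ∩ (T : Set X)).Nonempty ↔ x ∈ T :=
  ⟨fun ⟨_, hxy, hy⟩ => T.lower hxy hy, fun hx => ⟨x, le_rfl, hx⟩⟩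

lemma mem_distLaw_dnMap_upUnit_iff {X : Type*} [Preorder X] (S T : LowerSet X) :
    T ∈ distLaw (DnMap UpUnit S) ↔ S ≤ T := by
  simp only [DnMap, mem_distLaw_lowerClosure, Set.forall_mem_image, UpUnit,
    UpperSet.coe_Ici, LowerSet.Ici_inter_nonempty_iff]
  exact LowerSet.coe_subset_coe

/-- The unit law of the distributive law for the unit of `Up`:
`λ_X (Dn(η^Up_X) S) = η^Up_{Dn X} S`, and concretely both sides are
`{T ∈ Dn X | S ⊆ T}`. -/
theorem distLaw_upUnit {X : Type*} [PartialOrder X] (S : LowerSet X) :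
    distLaw (DnMap (UpUnit (X := X)) S) = UpUnit S ∧
    (distLaw (DnMap (UpUnit (X := X)) S) : Set (LowerSet X))
      = {T : LowerSet X | (S : Set X) ⊆ (T : Set X)} := by
  have hmem (T : LowerSet X) := mem_distLaw_dnMap_upUnit_iff S T
  exact ⟨SetLike.ext fun T => (hmem T).trans UpperSet.mem_Ici_iff.symm, Set.ext hmem⟩
end

section
/- For every poset X and every S ∈ Dn(Dn(Up X)), one has λ_X(μ^Dn_{Up X}(S)) = Up(μ^Dn_X)(λ_{Dn X}(Dn(λ_X)(S))); concretely, {T ∈ Dn X | ∀ s ∈ S, ∀ t ∈ s, (t ∩ T).Nonempty} equals the upward closure (with respect to inclusion of lower sets) of the images under union of those T ∈ Dn(Dn X) such that for all s ∈ S there exists u ∈ T with (t ∩ u).Nonempty for all t ∈ s. -/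
/-!
Everything reduces to the concrete description of `λ_X (μ^Dn S)`: the lower sets meeting every
`t` in every `s ∈ S`. A lower set `U` of lower sets lies in `λ_{Dn X} (Dn λ_X S)` exactly when each
`s ∈ S` has a member of `U` meeting all its `t`; the union of such a `U` then meets every `t`, and
conversely a lower set `T` of the concrete description is the union of `U = ↓T`.
-/

section

variable {X : Type*} [Preorder X]

theorem mem_dnMul {S : LowerSet (LowerSet X)} {x : X} : x ∈ DnMul S ↔ ∃ s ∈ S, x ∈ s :=
  Iff.rfl

theorem mem_distLaw {S : LowerSet (UpperSet X)} {T : LowerSet X} :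
    T ∈ distLaw S ↔ ∀ s ∈ S, ((s : Set X) ∩ (T : Set X)).Nonempty :=
  Iff.rfl

theorem dnMul_Iic (T : LowerSet X) : DnMul (LowerSet.Iic T) = T := by
  ext x
  exact ⟨fun ⟨_, hu, hx⟩ => hu hx, fun hx => ⟨T, LowerSet.mem_Iic_iff.2 le_rfl, hx⟩⟩

theorem mem_upMap_dnMul {A : UpperSet (LowerSet (LowerSet X))} {T : LowerSet X} :
    T ∈ UpMap DnMul A ↔ ∃ U ∈ A, DnMul U ≤ T := by
  simp only [UpMap, mem_upperClosure, Set.exists_mem_image, SetLike.mem_coe]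

theorem mem_distLaw_dnMul {S : LowerSet (LowerSet (UpperSet X))} {T : LowerSet X} :
    T ∈ distLaw (DnMul S) ↔ ∀ s ∈ S, ∀ t ∈ s, ((t : Set X) ∩ (T : Set X)).Nonempty := by
  simp only [mem_distLaw, mem_dnMul]
  exact ⟨fun h s hs t ht => h t ⟨s, hs, ht⟩, fun h t ⟨s, hs, ht⟩ => h s hs t ht⟩

theorem mem_distLaw_dnMap_distLaw {S : LowerSet (LowerSet (UpperSet X))}
    {U : LowerSet (LowerSet X)} :
    U ∈ distLaw (DnMap distLaw S) ↔
      ∀ s ∈ S, ∃ u ∈ U, ∀ t ∈ s, ((t : Set X) ∩ (u : Set X)).Nonempty := by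
  constructor
  · intro h s hs
    obtain ⟨u, hus, huU⟩ := h (distLaw s) (subset_lowerClosure ⟨s, hs, rfl⟩)
    exact ⟨u, huU, hus⟩
  · rintro h s' ⟨_, ⟨s, hs, rfl⟩, hs's⟩
    obtain ⟨u, huU, hus⟩ := h s hs
    -- `s' ≤ distLaw s` in `UpperSet` is the reverse inclusion `distLaw s ⊆ s'`
    exact ⟨u, hs's hus, huU⟩

theorem forall_inter_nonempty_iff_exists_dnMul_le {S : LowerSet (LowerSet (UpperSet X))}
    {T : LowerSet X} :
    (∀ s ∈ S, ∀ t ∈ s, ((t : Set X) ∩ (T : Set X)).Nonempty) ↔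
      ∃ U : LowerSet (LowerSet X),
        (∀ s ∈ S, ∃ u ∈ U, ∀ t ∈ s, ((t : Set X) ∩ (u : Set X)).Nonempty) ∧ DnMul U ≤ T := by
  constructor
  · intro h
    refine ⟨LowerSet.Iic T, fun s hs => ⟨T, LowerSet.mem_Iic_iff.2 le_rfl, h s hs⟩, ?_⟩
    exact (dnMul_Iic T).le
  · rintro ⟨U, hU, hUT⟩ s hs t ht
    obtain ⟨u, huU, hu⟩ := hU s hs
    exact (hu t ht).mono (Set.inter_subset_inter_right _ fun _ hx => hUT ⟨u, huU, hx⟩)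

end

/-- The multiplication law of the distributive law for `μ^Dn`:
`λ_X (μ^Dn_{Up X} S) = Up(μ^Dn_X) (λ_{Dn X} (Dn(λ_X) S))`, and concretely
`{T ∈ Dn X | ∀ s ∈ S, ∀ t ∈ s, (t ∩ T).Nonempty}` is the upward closure (with respect to
inclusion of lower sets) of the unions of those `U ∈ Dn (Dn X)` such that for all `s ∈ S`
there is `u ∈ U` meeting every `t ∈ s`. -/
theorem distLaw_dnMul {X : Type*} [PartialOrder X] (S : LowerSet (LowerSet (UpperSet X))) :
    distLaw (DnMul S) = UpMap (DnMul (X := X)) (distLaw (DnMap (distLaw (X := X)) S)) ∧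
    (distLaw (DnMul S) : Set (LowerSet X))
      = {T : LowerSet X | ∃ U : LowerSet (LowerSet X),
          (∀ s ∈ S, ∃ u ∈ U, ∀ t ∈ s, ((t : Set X) ∩ (u : Set X)).Nonempty) ∧
          DnMul U ≤ T} ∧
    (distLaw (DnMul S) : Set (LowerSet X))
      = {T : LowerSet X | ∀ s ∈ S, ∀ t ∈ s, ((t : Set X) ∩ (T : Set X)).Nonempty} := by
  refine ⟨SetLike.ext fun T => ?_, Set.ext fun T => ?_, Set.ext fun _ => mem_distLaw_dnMul⟩
  · simp only [mem_upMap_dnMul, mem_distLaw_dnMap_distLaw]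
    exact mem_distLaw_dnMul.trans forall_inter_nonempty_iff_exists_dnMul_le
  · exact mem_distLaw_dnMul.trans forall_inter_nonempty_iff_exists_dnMul_le
end

section
/- The functor Alt, with the unit η and multiplication μ described below, is a monad on the category of sets: Alt is functorial, η and μ are natural, and for every set X, μ_X ∘ η_{Alt X} = id, μ_X ∘ Alt(η_X) = id, and μ_X ∘ Alt(μ_X) = μ_X ∘ μ_{Alt X}. -/
/-- `Alt X` is the set of families of subsets of `X` that are upward closed with respect
to set inclusion. -/
def Alt (X : Type u) : Type u :=
  {S : Set (Set X) // ∀ s ∈ S, ∀ t : Set X, s ⊆ t → t ∈ S}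

/-- The action of `Alt` on functions. -/
def Alt.map {X Y : Type u} (f : X → Y) (S : Alt X) : Alt Y :=
  ⟨{T : Set Y | ∃ s ∈ S.1, f '' s ⊆ T}, by
    rintro T ⟨s, hs, hsub⟩ T' hTT'
    exact ⟨s, hs, hsub.trans hTT'⟩⟩

/-- The unit of the `Alt` monad. -/
def Alt.unit {X : Type u} (x : X) : Alt X :=
  ⟨{T : Set X | x ∈ T}, by
    intro s hs t hst
    exact hst hs⟩

/-- The multiplication of the `Alt` monad. -/
def Alt.mul {X : Type u} (S : Alt (Alt X)) : Alt X :=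
  ⟨{T : Set X | ∃ s ∈ S.1, ∀ t ∈ s, ∃ u ∈ t.1, ∀ v ∈ u, v ∈ T}, by
    rintro T ⟨s, hs, h⟩ T' hTT'
    exact ⟨s, hs, fun t ht => (h t ht).imp fun u hu => ⟨hu.1, fun v hv => hTT' (hu.2 v hv)⟩⟩⟩

/-- `(Alt, Alt.unit, Alt.mul)` is a monad on the category of sets: `Alt` is functorial,
the unit and multiplication are natural, and the monad laws hold. -/
theorem Alt.isMonad :
    (∀ (X : Type u), Alt.map (id : X → X) = id) ∧
    (∀ (X Y Z : Type u) (f : X → Y) (g : Y → Z),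
      Alt.map (g ∘ f) = Alt.map g ∘ Alt.map f) ∧
    (∀ (X Y : Type u) (f : X → Y), Alt.map f ∘ Alt.unit = Alt.unit ∘ f) ∧
    (∀ (X Y : Type u) (f : X → Y), Alt.map f ∘ Alt.mul = Alt.mul ∘ Alt.map (Alt.map f)) ∧
    (∀ (X : Type u), Alt.mul ∘ (Alt.unit (X := Alt X)) = id) ∧
    (∀ (X : Type u), Alt.mul ∘ Alt.map (Alt.unit (X := X)) = id) ∧
    (∀ (X : Type u), Alt.mul ∘ Alt.map (Alt.mul (X := X)) = Alt.mul ∘ Alt.mul) := by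
  refine ⟨?_, ?_, ?_, ?_, ?_, ?_, ?_⟩
  · -- map id = id
    intro X
    funext S
    apply Subtype.ext
    ext T
    simp only [Alt.map, Set.mem_setOf_eq, Set.image_id', id]
    constructor
    · rintro ⟨s, hs, hsub⟩; exact S.2 s hs T hsub
    · intro hT; exact ⟨T, hT, subset_rfl⟩
  · -- map (g ∘ f) = map g ∘ map f
    intro X Y Z f g
    funext S
    apply Subtype.ext
    ext T
    simp only [Alt.map, Set.mem_setOf_eq, Function.comp_apply]
    constructor
    · rintro ⟨s, hs, hsub⟩
      exact ⟨f '' s, ⟨s, hs, subset_rfl⟩, by rw [Set.image_image]; exact hsub⟩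
    · rintro ⟨s', ⟨s, hs, h1⟩, h2⟩
      refine ⟨s, hs, ?_⟩
      rw [← Set.image_image]
      exact (Set.image_mono (f := g) h1).trans h2
  · -- naturality of unit
    intro X Y f
    funext x
    apply Subtype.ext
    ext T
    simp only [Alt.map, Alt.unit, Set.mem_setOf_eq, Function.comp_apply]
    constructor
    · rintro ⟨s, hs, hsub⟩; exact hsub ⟨x, hs, rfl⟩
    · intro hT; exact ⟨{x}, rfl, by simpa⟩
  · -- naturality of mul
    intro X Y f
    funext S
    apply Subtype.ext
    ext T
    simp only [Alt.map, Alt.mul, Set.mem_setOf_eq, Function.comp_apply]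
    constructor
    · rintro ⟨A, ⟨s, hs, h⟩, hAT⟩
      refine ⟨Alt.map f '' s, ⟨s, hs, subset_rfl⟩, ?_⟩
      rintro t' ⟨t, ht, rfl⟩
      obtain ⟨u, hu, huA⟩ := h t ht
      exact ⟨f '' u, ⟨u, hu, subset_rfl⟩,
        by rintro v ⟨w, hw, rfl⟩; exact hAT ⟨w, huA w hw, rfl⟩⟩
    · rintro ⟨s', ⟨s, hs, h1⟩, h2⟩
      refine ⟨f ⁻¹' T, ⟨s, hs, ?_⟩, Set.image_preimage_subset f T⟩
      intro t ht
      obtain ⟨u', hu', hu'T⟩ := h2 (Alt.map f t) (h1 ⟨t, ht, rfl⟩)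
      obtain ⟨u, hu, hfu⟩ := hu'
      exact ⟨u, hu, fun v hv => hu'T _ (hfu ⟨v, hv, rfl⟩)⟩
  · -- mul ∘ unit = id
    intro X
    funext S
    apply Subtype.ext
    ext T
    simp only [Alt.mul, Alt.unit, Set.mem_setOf_eq, Function.comp_apply, id]
    constructor
    · rintro ⟨s, hSs, h⟩
      obtain ⟨u, hu, huT⟩ := h S hSs
      exact S.2 u hu T huT
    · intro hT
      exact ⟨{S}, rfl, by rintro t rfl; exact ⟨T, hT, fun v hv => hv⟩⟩
  · -- mul ∘ map unit = id
    intro X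
    funext S
    apply Subtype.ext
    ext T
    simp only [Alt.mul, Alt.map, Alt.unit, Set.mem_setOf_eq, Function.comp_apply, id]
    constructor
    · rintro ⟨s', ⟨s, hs, h1⟩, h2⟩
      refine S.2 s hs T fun x hx => ?_
      obtain ⟨u, hu, huT⟩ := h2 _ (h1 ⟨x, hx, rfl⟩)
      exact huT x hu
    · intro hT
      refine ⟨Alt.unit '' T, ⟨T, hT, subset_rfl⟩, ?_⟩
      rintro t ⟨x, hx, rfl⟩
      exact ⟨T, hx, fun v hv => hv⟩
  · -- associativity
    intro X
    funext S
    apply Subtype.ext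
    ext T
    simp only [Alt.mul, Alt.map, Set.mem_setOf_eq, Function.comp_apply]
    constructor
    · rintro ⟨s', ⟨s, hs, h1⟩, h2⟩
      refine ⟨{v : Alt X | ∃ w ∈ v.1, ∀ x ∈ w, x ∈ T}, ⟨s, hs, ?_⟩, fun A hA => hA⟩
      intro t ht
      obtain ⟨u, hu, huT⟩ := h2 (Alt.mul t) (h1 ⟨t, ht, rfl⟩)
      obtain ⟨a, ha, hab⟩ := hu
      refine ⟨a, ha, fun b hb => ?_⟩
      obtain ⟨c, hc, hcu⟩ := hab b hb
      exact ⟨c, hc, fun v hv => huT v (hcu v hv)⟩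
    · rintro ⟨B, ⟨s, hs, h1⟩, h2⟩
      refine ⟨Alt.mul '' s, ⟨s, hs, subset_rfl⟩, ?_⟩
      rintro t' ⟨t, ht, rfl⟩
      obtain ⟨a, ha, haB⟩ := h1 t ht
      refine ⟨T, ⟨a, ha, fun b hb => ?_⟩, fun v hv => hv⟩
      obtain ⟨w, hw, hwT⟩ := h2 b (haB b hb)
      exact ⟨w, hw, hwT⟩
end

section
/- Let m be a lawful monad on types, A a type (the alphabet), and β : m Bool → Bool an Eilenberg–Moore algebra for m (β (pure b) = b and β (joinM t) = β (β <$> t)). For each type X define λ_X : m (Bool × (A → X)) → Bool × (A → m X) by λ_X t = (β (Prod.fst <$> t), fun a => (fun p => p.2 a) <$> t). Then λ is a distributive law of the monad m over the functor D X = Bool × (A → X): (i) λ is natural, i.e. for every f : X → Y and t : m (Bool × (A → X)), λ_Y ((fun p => (p.1, f ∘ p.2)) <$> t) = (fun q => (q.1, fun a => f <$> q.2 a)) (λ_X t); (ii) λ_X (pure d) = (d.1, fun a => pure (d.2 a)) for every d : Bool × (A → X); (iii) λ_X (joinM t) = ((λ_{m X} (λ_X <$> t)).1, fun a => joinM ((λ_{m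 X} (λ_X <$> t)).2 a)) for every t : m (m (Bool × (A → X))). -/
def autDistLaw {m : Type → Type} [Monad m] (β : m Bool → Bool) {A X : Type}
    (t : m (Bool × (A → X))) : Bool × (A → m X) :=
  (β (Prod.fst <$> t), fun a => (fun p => p.2 a) <$> t)

section

variable {m : Type → Type} [Monad m] [LawfulMonad m] {A : Type} (β : m Bool → Bool)

theorem autDistLaw_map {X Y : Type} (f : X → Y) (t : m (Bool × (A → X))) :
    autDistLaw β ((fun p => (p.1, f ∘ p.2)) <$> t)
      = ((autDistLaw β t).1, fun a => f <$> (autDistLaw β t).2 a) := by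
  simp only [autDistLaw, Functor.map_map, Function.comp_def]

theorem autDistLaw_pure (hβη : ∀ b : Bool, β (pure b) = b) {X : Type} (d : Bool × (A → X)) :
    autDistLaw β (pure d : m (Bool × (A → X))) = (d.1, fun a => pure (d.2 a)) := by
  simp only [autDistLaw, map_pure, hβη]

theorem autDistLaw_joinM (hβμ : ∀ t : m (m Bool), β (joinM t) = β (β <$> t)) {X : Type}
    (t : m (m (Bool × (A → X)))) :
    autDistLaw β (joinM t)
      = ((autDistLaw β (autDistLaw β <$> t)).1,
          fun a => joinM ((autDistLaw β (autDistLaw β <$> t)).2 a)) := by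
  refine Prod.ext ?_ (funext fun a => ?_)
  · calc β (Prod.fst <$> joinM t)
        = β (β <$> (Functor.map Prod.fst <$> t)) := by rw [← joinM_map_map, hβμ]
      _ = β (Prod.fst <$> (autDistLaw β <$> t)) := by simp only [Functor.map_map]; rfl
  · calc (fun p => p.2 a) <$> joinM t
        = joinM (Functor.map (fun p => p.2 a) <$> t) := (joinM_map_map _ t).symm
      _ = joinM ((fun q => q.2 a) <$> (autDistLaw β <$> t)) := by
        simp only [Functor.map_map]; rfl

end

/-- The family `autDistLaw` is a distributive law of the monad `m` over the
deterministic-automaton functor `D X = Bool × (A → X)`: it is natural, compatible with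
the unit of `m`, and compatible with the multiplication of `m`. -/
theorem autDistLaw_isDistributiveLaw {m : Type → Type} [Monad m] [LawfulMonad m]
    (β : m Bool → Bool)
    (hβη : ∀ b : Bool, β (pure b) = b)
    (hβμ : ∀ t : m (m Bool), β (joinM t) = β (β <$> t))
    (A : Type) :
    (∀ (X Y : Type) (f : X → Y) (t : m (Bool × (A → X))),
      autDistLaw β ((fun p => (p.1, f ∘ p.2)) <$> t)
        = ((fun q : Bool × (A → m X) => (q.1, fun a => f <$> q.2 a)) (autDistLaw β t))) ∧
    (∀ (X : Type) (d : Bool × (A → X)),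
      autDistLaw β (pure d) = (d.1, fun a => pure (d.2 a))) ∧
    (∀ (X : Type) (t : m (m (Bool × (A → X)))),
      autDistLaw β (joinM t)
        = ((autDistLaw β (autDistLaw β <$> t)).1,
            fun a => joinM ((autDistLaw β (autDistLaw β <$> t)).2 a))) :=
  ⟨fun _ _ f t => autDistLaw_map β f t, fun _ d => autDistLaw_pure β hβη d,
    fun _ t => autDistLaw_joinM β hβμ t⟩
end

section
/- Let m be a lawful monad on types, A a type (the alphabet), β : m Bool → Bool an Eilenberg–Moore algebra for m, and (o, δ) an m-automaton with o : X → Bool and δ : X → A → m X. Let beh₁ : X → List A → Bool be the unique function with beh₁ x [] = o x and beh₁ x (a :: w) = β ((fun y => beh₁ y w) <$> δ x a), and define beh₂ : m X → List A → Bool by beh₂ t [] = β (o <$> t) and beh₂ t (a :: w) = beh₂ (joinM ((fun x => δ x a) <$> t)) w. Then beh₂ (pure x) w = beh₁ x w for every x : X and w : List A. -/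
/-!
The determinized automaton runs on `m X` and evaluates with `β` only at the end, whereas the
bialgebraic semantics evaluates with `β` after every step. The two agree on every state
`t : m X` in the form `beh₂ t w = β (beh₁ · w <$> t)`, by induction on `w`: the multiplication
law of `β` lets one collapse the flattened successor `joinM (δ · a <$> t)` step by step. The unit
law then specialises this to `t = pure x`.
-/

section

variable {m : Type → Type} [Monad m] [LawfulMonad m]

theorem map_joinM_map {X Y Z : Type} (f : X → m Y) (g : Y → Z) (t : m X) :
    g <$> joinM (f <$> t) = joinM ((fun x => g <$> f x) <$> t) := by
  simp [joinM, map_bind, bind_map_left]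

theorem algebra_map_joinM_map {α X Y : Type} {β : m α → α}
    (hβμ : ∀ t : m (m α), β (joinM t) = β (β <$> t)) (f : X → m Y) (g : Y → α) (t : m X) :
    β (g <$> joinM (f <$> t)) = β ((fun x => β (g <$> f x)) <$> t) := by
  rw [map_joinM_map, hβμ, ← comp_map]
  rfl

theorem determinization_eq_algebra_map_bialgebraic {A X : Type} {β : m Bool → Bool}
    (hβμ : ∀ t : m (m Bool), β (joinM t) = β (β <$> t))
    {o : X → Bool} {δ : X → A → m X} {beh₁ : X → List A → Bool}
    (h₁nil : ∀ x : X, beh₁ x [] = o x)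
    (h₁cons : ∀ (x : X) (a : A) (w : List A),
      beh₁ x (a :: w) = β ((fun y => beh₁ y w) <$> δ x a))
    {beh₂ : m X → List A → Bool}
    (h₂nil : ∀ t : m X, beh₂ t [] = β (o <$> t))
    (h₂cons : ∀ (t : m X) (a : A) (w : List A),
      beh₂ t (a :: w) = beh₂ (joinM ((fun x => δ x a) <$> t)) w)
    (w : List A) (t : m X) :
    beh₂ t w = β ((fun x => beh₁ x w) <$> t) := by
  induction w generalizing t with
  | nil =>
    rw [h₂nil]
    congr 2
    exact funext fun x => (h₁nil x).symm
  | cons a w ih =>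
    rw [h₂cons, ih, algebra_map_joinM_map hβμ]
    congr 2
    exact funext fun x => (h₁cons x a w).symm

end

/-- Correspondence of the bialgebraic semantics `beh₁` and the semantics via
determinization `beh₂`: `beh₂ (pure x) = beh₁ x`. -/
theorem determinization_semantics_eq_bialgebraic {m : Type → Type} [Monad m] [LawfulMonad m]
    {A X : Type} (β : m Bool → Bool)
    (hβη : ∀ b : Bool, β (pure b) = b)
    (hβμ : ∀ t : m (m Bool), β (joinM t) = β (β <$> t))
    (o : X → Bool) (δ : X → A → m X)
    (beh₁ : X → List A → Bool)
    (h₁nil : ∀ x : X, beh₁ x [] = o x)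
    (h₁cons : ∀ (x : X) (a : A) (w : List A),
      beh₁ x (a :: w) = β ((fun y => beh₁ y w) <$> δ x a))
    (beh₂ : m X → List A → Bool)
    (h₂nil : ∀ t : m X, beh₂ t [] = β (o <$> t))
    (h₂cons : ∀ (t : m X) (a : A) (w : List A),
      beh₂ t (a :: w) = beh₂ (joinM ((fun x => δ x a) <$> t)) w) :
    ∀ (x : X) (w : List A), beh₂ (pure x) w = beh₁ x w := by
  intro x w
  rw [determinization_eq_algebra_map_bialgebraic hβμ h₁nil h₁cons h₂nil h₂cons, map_pure, hβη]
end
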